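/- Let n be a positive natural number, let Z be a measurable space, let π be a probability measure on Z, let μ : Z → ℝⁿ be measurable, and let σ > 0. Define f(x,z) = (2πσ²)^{-n/2} · exp(-‖x - μ(z)‖²/(2σ²)) and p(x) = ∫ f(x,z) dπ(z), and let m(x) = (∫ μ(z) · f(x,z) dπ(z)) / p(x) denote the posterior mean reconstruction. Then for every x ∈ ℝⁿ, the gradient of log p at x vanishes if and only if m(x) = x. In particular, every critical point of the marginal log-density p (hence every local maximum of p) is exactly a point whose average posterior reconstruction equals the point itself. -/

import Mathlib

/-!
Differentiating under the integral sign (the derivative `f(x,z) (μ(z) - x) / σ²` of the kernel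
is bounded uniformly, since `d e^{-d²/(2σ²)} ≤ σ`) gives Tweedie's formula
`∇ p(x) = σ⁻² ∫ f(x,z) (μ(z) - x) dπ(z) = σ⁻² p(x) (m(x) - x)`, hence
`∇ log p(x) = σ⁻² (m(x) - x)`, which vanishes exactly when `m(x) = x`.
-/

open MeasureTheory InnerProductSpace Filter Topology

section Gradient

variable {E : Type*} [NormedAddCommGroup E] [InnerProductSpace ℝ E] [CompleteSpace E]

theorem HasGradientAt.log {f : E → ℝ} {f' x : E} (hf : HasGradientAt f f' x) (hx : f x ≠ 0) :
    HasGradientAt (fun y => Real.log (f y)) ((f x)⁻¹ • f') x := by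
  rw [hasGradientAt_iff_hasFDerivAt, map_smulₛₗ, conj_trivial]
  exact hf.hasFDerivAt.log hx

theorem hasGradientAt_integral_of_dominated_of_gradient_le {Z : Type*} [MeasurableSpace Z]
    {π : Measure Z} {F : E → Z → ℝ} {F' : E → Z → E} {x₀ : E} {s : Set E} {bound : Z → ℝ}
    (hs : s ∈ 𝓝 x₀) (hF_meas : ∀ᶠ x in 𝓝 x₀, AEStronglyMeasurable (F x) π)
    (hF_int : Integrable (F x₀) π) (hF'_meas : AEStronglyMeasurable (F' x₀) π)
    (h_bound : ∀ᵐ z ∂π, ∀ x ∈ s, ‖F' x z‖ ≤ bound z) (bound_integrable : Integrable bound π)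
    (h_diff : ∀ᵐ z ∂π, ∀ x ∈ s, HasGradientAt (F · z) (F' x z) x) :
    HasGradientAt (fun x => ∫ z, F x z ∂π) (∫ z, F' x₀ z ∂π) x₀ := by
  let L : E →SL[starRingEnd ℝ] StrongDual ℝ E := (toDual ℝ E).toContinuousLinearEquiv
  have hF'_int : Integrable (F' x₀) π :=
    bound_integrable.mono' hF'_meas (h_bound.mono fun z hz => hz x₀ (mem_of_mem_nhds hs))
  have hL : toDual ℝ E (∫ z, F' x₀ z ∂π) = ∫ z, toDual ℝ E (F' x₀ z) ∂π :=
    (L.integral_comp_commSL (by simp) hF'_int).symm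
  rw [hasGradientAt_iff_hasFDerivAt, hL]
  refine hasFDerivAt_integral_of_dominated_of_fderiv_le hs hF_meas hF_int
    (L.continuous.comp_aestronglyMeasurable hF'_meas) ?_ bound_integrable h_diff
  filter_upwards [h_bound] with z hz x hx
  simpa [L] using hz x hx

end Gradient

theorem mul_exp_neg_sq_div_le {σ : ℝ} (hσ : 0 < σ) (d : ℝ) :
    d * Real.exp (-d ^ 2 / (2 * σ ^ 2)) ≤ σ := by
  have hexp : d ^ 2 / (2 * σ ^ 2) + 1 ≤ Real.exp (d ^ 2 / (2 * σ ^ 2)) := Real.add_one_le_exp _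
  have hlin : d ≤ σ * (d ^ 2 / (2 * σ ^ 2) + 1) := by
    have hsq : σ * (d ^ 2 / (2 * σ ^ 2) + 1) - d = ((d - σ) ^ 2 + σ ^ 2) / (2 * σ) := by
      field_simp; ring
    rw [← sub_nonneg, hsq]
    positivity
  rw [neg_div, Real.exp_neg, ← div_eq_mul_inv, div_le_iff₀ (Real.exp_pos _)]
  nlinarith

section IsotropicGaussian

variable {E : Type*} [NormedAddCommGroup E] {c σ : ℝ}
  {Z : Type*} [MeasurableSpace Z] {π : Measure Z} {μ : Z → E}

noncomputable def isotropicGaussian (c σ : ℝ) (a x : E) : ℝ :=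
  c * Real.exp (-‖x - a‖ ^ 2 / (2 * σ ^ 2))

theorem abs_isotropicGaussian_le (a x : E) : |isotropicGaussian c σ a x| ≤ |c| := by
  rw [isotropicGaussian, abs_mul, Real.abs_exp]
  refine mul_le_of_le_one_right (abs_nonneg c) (Real.exp_le_one_iff.2 ?_)
  rw [neg_div]
  exact neg_nonpos.2 (by positivity)

theorem norm_isotropicGaussian_smul_sub_le [NormedSpace ℝ E] (hσ : 0 < σ) (a x : E) :
    ‖isotropicGaussian c σ a x • (a - x)‖ ≤ |c| * σ := by
  rw [norm_smul, isotropicGaussian, norm_mul, Real.norm_eq_abs, Real.norm_eq_abs, Real.abs_exp,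
    mul_assoc, norm_sub_rev, mul_comm (Real.exp _)]
  exact mul_le_mul_of_nonneg_left (mul_exp_neg_sq_div_le hσ _) (abs_nonneg c)

theorem aestronglyMeasurable_isotropicGaussian (hμ : AEStronglyMeasurable μ π) (x : E) :
    AEStronglyMeasurable (fun z => isotropicGaussian c σ (μ z) x) π :=
  (show Continuous fun a => isotropicGaussian c σ a x by unfold isotropicGaussian; fun_prop)
    |>.comp_aestronglyMeasurable hμ

variable [IsFiniteMeasure π]

theorem integrable_isotropicGaussian (hμ : AEStronglyMeasurable μ π) (x : E) :
    Integrable (fun z => isotropicGaussian c σ (μ z) x) π :=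
  .of_bound (aestronglyMeasurable_isotropicGaussian hμ x) |c|
    (ae_of_all _ fun z => abs_isotropicGaussian_le (μ z) x)

theorem integrable_isotropicGaussian_smul_sub [NormedSpace ℝ E]
    (hμ : AEStronglyMeasurable μ π) (hσ : 0 < σ) (x : E) :
    Integrable (fun z => isotropicGaussian c σ (μ z) x • (μ z - x)) π :=
  .of_bound ((aestronglyMeasurable_isotropicGaussian hμ x).smul
      (hμ.sub aestronglyMeasurable_const)) (|c| * σ)
    (ae_of_all _ fun z => norm_isotropicGaussian_smul_sub_le hσ (μ z) x)

theorem integral_isotropicGaussian_pos [NeZero π] (hμ : AEStronglyMeasurable μ π) (hc : 0 < c)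
    (σ : ℝ) (x : E) :
    0 < ∫ z, isotropicGaussian c σ (μ z) x ∂π := by
  simp only [isotropicGaussian, integral_const_mul]
  exact mul_pos hc (integral_exp_pos (by
    simpa [isotropicGaussian] using integrable_isotropicGaussian (c := 1) (σ := σ) hμ x))

variable [InnerProductSpace ℝ E] [CompleteSpace E]

theorem hasGradientAt_isotropicGaussian (c σ : ℝ) (a x : E) :
    HasGradientAt (isotropicGaussian c σ a)
      ((σ ^ 2)⁻¹ • isotropicGaussian c σ a x • (a - x)) x := by
  have hexp := ((((hasFDerivAt_id x).sub_const a).norm_sq).const_mul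
    (-(2 * σ ^ 2)⁻¹)).exp.const_mul c
  have hfun : isotropicGaussian c σ a = fun y => c * Real.exp (-(2 * σ ^ 2)⁻¹ * ‖y - a‖ ^ 2) := by
    funext y; rw [isotropicGaussian, neg_div, div_eq_inv_mul, neg_mul]
  rw [hasGradientAt_iff_hasFDerivAt, hfun]
  refine hexp.congr_fderiv ?_
  ext v
  simp only [smul_apply, ContinuousLinearMap.comp_apply, ContinuousLinearMap.id_apply, id_eq,
    innerSL_apply_apply, toDual_apply_apply, real_inner_smul_left, inner_sub_left, smul_eq_mul,
    nsmul_eq_mul, Nat.cast_ofNat]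
  ring

theorem hasGradientAt_integral_isotropicGaussian (hμ : AEStronglyMeasurable μ π) (hσ : 0 < σ)
    (x : E) :
    HasGradientAt (fun y => ∫ z, isotropicGaussian c σ (μ z) y ∂π)
      ((σ ^ 2)⁻¹ • ∫ z, isotropicGaussian c σ (μ z) x • (μ z - x) ∂π) x := by
  rw [← integral_smul]
  refine hasGradientAt_integral_of_dominated_of_gradient_le
    (bound := fun _ => (σ ^ 2)⁻¹ * (|c| * σ)) univ_mem
    (Eventually.of_forall (aestronglyMeasurable_isotropicGaussian hμ))
    (integrable_isotropicGaussian hμ x)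
    ((integrable_isotropicGaussian_smul_sub hμ hσ x).smul _).aestronglyMeasurable
    (ae_of_all _ fun z y _ => ?_) (integrable_const _)
    (ae_of_all _ fun z y _ => hasGradientAt_isotropicGaussian c σ (μ z) y)
  rw [norm_smul, Real.norm_of_nonneg (by positivity)]
  exact mul_le_mul_of_nonneg_left (norm_isotropicGaussian_smul_sub_le hσ (μ z) y) (by positivity)

theorem hasGradientAt_log_integral_isotropicGaussian [NeZero π] (hμ : AEStronglyMeasurable μ π)
    (hσ : 0 < σ) (hc : 0 < c) (x : E) :
    HasGradientAt (fun y => Real.log (∫ z, isotropicGaussian c σ (μ z) y ∂π))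
      ((σ ^ 2)⁻¹ • ((∫ z, isotropicGaussian c σ (μ z) x ∂π)⁻¹ •
        ∫ z, isotropicGaussian c σ (μ z) x • μ z ∂π - x)) x := by
  have hp := (integral_isotropicGaussian_pos hμ hc σ x).ne'
  have hmean : ∫ z, isotropicGaussian c σ (μ z) x • μ z ∂π
      = ∫ z, isotropicGaussian c σ (μ z) x • (μ z - x) ∂π
        + (∫ z, isotropicGaussian c σ (μ z) x ∂π) • x := by
    rw [← integral_smul_const, ← integral_add (integrable_isotropicGaussian_smul_sub hμ hσ x)
      ((integrable_isotropicGaussian hμ x).smul_const x)]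
    simp_rw [← smul_add, sub_add_cancel]
  rw [hmean, smul_add, inv_smul_smul₀ hp, add_sub_cancel_right, smul_comm]
  exact (hasGradientAt_integral_isotropicGaussian hμ hσ x).log hp

end IsotropicGaussian

theorem vae_critical_point_iff_perfect_reconstruction_general
    (n : ℕ) {Z : Type*} [MeasurableSpace Z]
    (π : Measure Z) [IsProbabilityMeasure π]
    (μ : Z → EuclideanSpace ℝ (Fin n)) (hμ : Measurable μ)
    (σ : ℝ) (hσ : 0 < σ)
    (f : EuclideanSpace ℝ (Fin n) → Z → ℝ)
    (hf : ∀ x z, f x z =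
      (2 * Real.pi * σ ^ 2) ^ (-(n : ℝ) / 2) *
        Real.exp (-‖x - μ z‖ ^ 2 / (2 * σ ^ 2)))
    (p : EuclideanSpace ℝ (Fin n) → ℝ)
    (hp : ∀ x, p x = ∫ z, f x z ∂π)
    (m : EuclideanSpace ℝ (Fin n) → EuclideanSpace ℝ (Fin n))
    (hm : ∀ x, m x = (p x)⁻¹ • ∫ z, f x z • μ z ∂π) :
    ∀ x : EuclideanSpace ℝ (Fin n),
      gradient (fun y => Real.log (p y)) x = 0 ↔ m x = x := by
  intro x
  obtain ⟨c, hc, rfl⟩ : ∃ c : ℝ, 0 < c ∧ f = fun y z => isotropicGaussian c σ (μ z) y :=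
    ⟨_, by positivity, funext₂ hf⟩
  obtain rfl : p = fun y => ∫ z, isotropicGaussian c σ (μ z) y ∂π := funext hp
  have hgrad :=
    hasGradientAt_log_integral_isotropicGaussian (π := π) hμ.aestronglyMeasurable hσ hc x
  rw [← hm] at hgrad
  rw [hgrad.gradient, smul_eq_zero, sub_eq_zero, or_iff_right (by positivity)]

/-- Critical points of the VAE log-marginal density are exactly the points whose
average posterior reconstruction is perfect: with the setup of Proposition 1
(`f(x,z) = (2πσ²)^{-n/2} exp(-‖x-μ(z)‖²/(2σ²))`, `p(x) = ∫ f(x,z) dπ(z)`,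
posterior mean `m(x) = (∫ μ(z) f(x,z) dπ(z))/p(x)`), for every `x` the gradient
of `log p` vanishes at `x` if and only if `m(x) = x`. -/
theorem vae_critical_point_iff_perfect_reconstruction
    (n : ℕ) (hn : 0 < n) {Z : Type*} [MeasurableSpace Z]
    (π : Measure Z) [IsProbabilityMeasure π]
    (μ : Z → EuclideanSpace ℝ (Fin n)) (hμ : Measurable μ)
    (σ : ℝ) (hσ : 0 < σ)
    (f : EuclideanSpace ℝ (Fin n) → Z → ℝ)
    (hf : ∀ x z, f x z =
      (2 * Real.pi * σ ^ 2) ^ (-(n : ℝ) / 2) *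
        Real.exp (-‖x - μ z‖ ^ 2 / (2 * σ ^ 2)))
    (p : EuclideanSpace ℝ (Fin n) → ℝ)
    (hp : ∀ x, p x = ∫ z, f x z ∂π)
    (m : EuclideanSpace ℝ (Fin n) → EuclideanSpace ℝ (Fin n))
    (hm : ∀ x, m x = (p x)⁻¹ • ∫ z, f x z • μ z ∂π) :
    ∀ x : EuclideanSpace ℝ (Fin n),
      gradient (fun y => Real.log (p y)) x = 0 ↔ m x = x :=
  vae_critical_point_iff_perfect_reconstruction_general n π μ hμ σ hσ f hf p hp m hm
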